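/- Let r, m, λ₁,…,λ_r be positive integers, λ₀ = ∑_{i=1}^r λ_i, r < λ₀, and define η_k as in the multiset lemma. Then ∑_{k=r}^{λ₀-1} η_k = ((m-1)(λ₀ - r) - r + ∑_{i=1}^r gcd(m, λ_i)) / 2. -/

import Mathlib

/-!
For `0 < t ≤ m` the condition `t ≤ ⌊s_i m / λ_i⌋` means `s_i ≥ ⌈t λ_i / m⌉`, so `t ≤ η_k` exactly
when `k ≥ F(t) := ∑_i ⌈t λ_i / m⌉` (fill up the parts between these lower bounds and `λ_i`).
Hence `η_k = #{t ∈ [1, m) | F(t) ≤ k}`, and counting the pairs `(k, t)` the other way gives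
`∑_k η_k = ∑_{t=1}^{m-1} (λ₀ - F(t))`. Pairing `t` with `m - t`,
`⌈t λ / m⌉ + ⌈(m - t) λ / m⌉ = λ + 1` unless `m ∣ t λ`, which happens for `gcd(m, λ) - 1` values
of `t`; this evaluates `∑_t F(t)`.
-/

open Finset

/-- min over i < r of ⌊s i * m / lam i⌋ -/
noncomputable def kinf (m r : ℕ) (lam : ℕ → ℕ) (s : ℕ → ℕ) : ℕ :=
  sInf {w : ℕ | ∃ i, i < r ∧ w = s i * m / lam i}

/-- η_k = max over tuples (s_1,…,s_r) with 1 ≤ s_i ≤ λ_i and ∑ s_i = k of min_i ⌊s_i m/λ_i⌋ -/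
noncomputable def eta (m r : ℕ) (lam : ℕ → ℕ) (k : ℕ) : ℕ :=
  sSup {v : ℕ | ∃ s : ℕ → ℕ, (∀ i, i < r → 1 ≤ s i ∧ s i ≤ lam i) ∧
      (∑ i ∈ Finset.range r, s i) = k ∧ v = kinf m r lam s}

/-- extended η: 0 for k < r, η_k for r ≤ k < λ₀, m-1 for k ≥ λ₀ -/
noncomputable def etaExt (m r lam0 : ℕ) (lam : ℕ → ℕ) (k : ℕ) : ℕ :=
  if k < r then 0 else if k < lam0 then eta m r lam k else m - 1

/-- ε_k = m k - λ₀ (η_k + 1) -/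
noncomputable def eps (m r lam0 : ℕ) (lam : ℕ → ℕ) (k : ℕ) : ℤ :=
  (m : ℤ) * k - (lam0 : ℤ) * (etaExt m r lam0 lam k + 1)

def IsNumericalSemigroup (H : Set ℕ) : Prop :=
  0 ∈ H ∧ (∀ a ∈ H, ∀ b ∈ H, a + b ∈ H) ∧ {x : ℕ | x ∉ H}.Finite


section CeilDiv

variable {m l t : ℕ}

theorem le_mul_div_iff_ceilDiv_le (hm : 0 < m) (hl : 0 < l) (s : ℕ) :
    t ≤ s * m / l ↔ t * l ⌈/⌉ m ≤ s := by
  rw [Nat.le_div_iff_mul_le hl, ceilDiv_le_iff_le_mul hm, Nat.mul_comm m s]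

theorem one_le_mul_ceilDiv (hm : 0 < m) (ht : 0 < t) (hl : 0 < l) : 1 ≤ t * l ⌈/⌉ m :=
  Nat.pos_of_ne_zero fun h => by
    have := (ceilDiv_le_iff_le_mul hm).1 h.le
    rw [Nat.mul_zero, Nat.le_zero, Nat.mul_eq_zero] at this
    omega

theorem mul_ceilDiv_le (hm : 0 < m) (htm : t ≤ m) : t * l ⌈/⌉ m ≤ l :=
  (ceilDiv_le_iff_le_mul hm).2 (Nat.mul_le_mul_right l htm)

theorem ceilDiv_eq_of_le_of_lt {a c : ℕ} (hac : a ≤ m * c) (hca : m * c < a + m) :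
    a ⌈/⌉ m = c := by
  have hm : 0 < m := Nat.pos_of_ne_zero (by rintro rfl; omega)
  refine le_antisymm ((ceilDiv_le_iff_le_mul hm).2 hac) (by_contra fun h => ?_)
  have := (ceilDiv_le_iff_le_mul hm).1 (Nat.le_sub_one_of_lt (not_le.1 h))
  have hsub : m * (c - 1) = m * c - m := Nat.mul_sub_one m c
  have hc : c ≠ 0 := by rintro rfl; omega
  have : m ≤ m * c := Nat.le_mul_of_pos_right m (Nat.pos_of_ne_zero hc)
  omega

theorem ceilDiv_add_ceilDiv {a b : ℕ} (hm : 0 < m) (hab : a + b = m * l) :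
    a ⌈/⌉ m + b ⌈/⌉ m + (if m ∣ a then 1 else 0) = l + 1 := by
  obtain ⟨q, ρ, hρ, rfl⟩ : ∃ q ρ, ρ < m ∧ a = m * q + ρ :=
    ⟨a / m, a % m, Nat.mod_lt a hm, (Nat.div_add_mod a m).symm⟩
  have hql : q ≤ l := Nat.le_of_mul_le_mul_left (by omega) hm
  have hsub : m * (l - q) = m * l - m * q := Nat.mul_sub m l q
  have hsucc : m * (q + 1) = m * q + m := Nat.mul_succ m q
  rcases Nat.eq_zero_or_pos ρ with rfl | hρ0
  · rw [if_pos (Dvd.intro q (Nat.add_zero _).symm),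
      ceilDiv_eq_of_le_of_lt (c := q) (by omega) (by omega),
      ceilDiv_eq_of_le_of_lt (c := l - q) (by omega) (by omega)]
    omega
  · have hndvd : ¬ m ∣ m * q + ρ := by
      rw [Nat.dvd_add_right (Dvd.intro q rfl)]
      exact Nat.not_dvd_of_pos_of_lt hρ0 hρ
    have hql' : q < l := by
      by_contra! h
      have : m * l ≤ m * q := Nat.mul_le_mul_left m h
      omega
    rw [if_neg hndvd, ceilDiv_eq_of_le_of_lt (c := q + 1) (by omega) (by omega),
      ceilDiv_eq_of_le_of_lt (c := l - q) (by omega) (by omega)]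
    omega

theorem card_filter_dvd_mul_add_one (hm : 0 < m) :
    #{t ∈ Ico 1 m | m ∣ t * l} + 1 = Nat.gcd m l := by
  set g := Nat.gcd m l
  have hg : 0 < g := Nat.gcd_pos_of_pos_left l hm
  have hdg : m / g * g = m := Nat.div_mul_cancel (Nat.gcd_dvd_left m l)
  have hd : 0 < m / g := Nat.div_pos (Nat.gcd_le_left l hm) hg
  have hdvd : ∀ t, m ∣ t * l ↔ m / g ∣ t := fun t => by
    rw [Nat.div_dvd_iff_dvd_mul (Nat.gcd_dvd_left m l) hg, Nat.mul_comm g]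
    exact dvd_mul_gcd_iff_dvd_mul.symm
  have hfilter : {t ∈ Ico 1 m | m ∣ t * l} = {t ∈ Ioc 0 (m - 1) | m / g ∣ t} := by
    ext t
    rw [mem_filter, mem_filter, hdvd, mem_Ico, mem_Ioc]
    omega
  rw [hfilter, Nat.Ioc_filter_dvd_card_eq_div]
  have hsub : (g - 1) * (m / g) = m - m / g := by rw [Nat.sub_one_mul, Nat.mul_comm, hdg]
  rw [Nat.div_eq_of_lt_le (k := g - 1) (by omega)
    (by rw [Nat.sub_add_cancel hg, Nat.mul_comm]; omega)]
  omega

theorem two_mul_sum_mul_ceilDiv_add_gcd (hm : 0 < m) :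
    2 * ∑ t ∈ Ico 1 m, t * l ⌈/⌉ m + Nat.gcd m l = (m - 1) * (l + 1) + 1 := by
  have hpair : ∀ t ∈ Ico 1 m,
      t * l ⌈/⌉ m + (m - t) * l ⌈/⌉ m + (if m ∣ t * l then 1 else 0) = l + 1 := fun t ht =>
    ceilDiv_add_ceilDiv hm (by rw [← Nat.add_mul, Nat.add_sub_cancel' (mem_Ico.1 ht).2.le])
  have hreflect : ∑ t ∈ Ico 1 m, (m - t) * l ⌈/⌉ m = ∑ t ∈ Ico 1 m, t * l ⌈/⌉ m := by
    rw [sum_Ico_reflect (fun t => t * l ⌈/⌉ m) 1 (Nat.le_succ m), Nat.add_sub_cancel,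
      Nat.add_sub_cancel_left]
  have hsum := sum_congr rfl hpair
  rw [sum_add_distrib, sum_add_distrib, hreflect, ← card_filter, sum_const, Nat.card_Ico,
    smul_eq_mul] at hsum
  rw [← card_filter_dvd_mul_add_one hm (l := l)]
  omega

end CeilDiv

theorem exists_sum_range_eq_of_le {a b : ℕ → ℕ} {n k : ℕ} (hab : ∀ i < n, a i ≤ b i)
    (hak : ∑ i ∈ range n, a i ≤ k) (hkb : k ≤ ∑ i ∈ range n, b i) :
    ∃ s : ℕ → ℕ, (∀ i < n, a i ≤ s i ∧ s i ≤ b i) ∧ ∑ i ∈ range n, s i = k := by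
  induction n generalizing k with
  | zero => exact ⟨a, by simp, by simp_all⟩
  | succ n ih =>
    rw [sum_range_succ] at hak hkb
    have habn := hab n (Nat.lt_succ_self n)
    have hsum_le : ∑ i ∈ range n, a i ≤ ∑ i ∈ range n, b i :=
      sum_le_sum fun i hi => hab i (Nat.lt_succ_of_lt (mem_range.1 hi))
    set sn := min (b n) (k - ∑ i ∈ range n, a i)
    obtain ⟨s, hs, hsum⟩ := ih (k := k - sn) (fun i hi => hab i (Nat.lt_succ_of_lt hi))
      (by omega) (by omega)
    refine ⟨Function.update s n sn, fun i hi => ?_, ?_⟩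
    · rcases eq_or_ne i n with rfl | hin
      · rw [Function.update_self]
        omega
      · rw [Function.update_of_ne hin]
        exact hs i (by omega)
    · rw [sum_range_succ, Function.update_self,
        sum_congr rfl fun i hi => Function.update_of_ne (mem_range.1 hi).ne _ _, hsum]
      omega

section Eta

variable {m r : ℕ} {lam : ℕ → ℕ}

/-- The least `k` with `t ≤ η_k`: each part `s_i` must be at least `⌈t λ_i / m⌉`. -/
def etaThreshold (m r : ℕ) (lam : ℕ → ℕ) (t : ℕ) : ℕ :=
  ∑ i ∈ range r, t * lam i ⌈/⌉ m

theorem etaThreshold_self (hm : 0 < m) : etaThreshold m r lam m = ∑ i ∈ range r, lam i :=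
  sum_congr rfl fun i _ => smul_ceilDiv hm (lam i)

theorem etaThreshold_mem_Icc (hm : 0 < m) (hlam : ∀ i < r, 0 < lam i) {t : ℕ} (ht : 0 < t)
    (htm : t ≤ m) : etaThreshold m r lam t ∈ Icc r (∑ i ∈ range r, lam i) := by
  refine mem_Icc.2 ⟨?_, sum_le_sum fun i _ => mul_ceilDiv_le hm htm⟩
  calc r = ∑ _i ∈ range r, 1 := by simp
    _ ≤ _ := sum_le_sum fun i hi => one_le_mul_ceilDiv hm ht (hlam i (mem_range.1 hi))

theorem le_kinf_iff (hr : 0 < r) {s : ℕ → ℕ} {t : ℕ} :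
    t ≤ kinf m r lam s ↔ ∀ i < r, t ≤ s i * m / lam i := by
  refine ⟨fun h i hi => h.trans (Nat.sInf_le ⟨i, hi, rfl⟩), fun h => ?_⟩
  refine le_csInf ⟨_, 0, hr, rfl⟩ ?_
  rintro _ ⟨i, hi, rfl⟩
  exact h i hi

theorem kinf_le (hr : 0 < r) {s : ℕ → ℕ} (hs : s 0 ≤ lam 0) : kinf m r lam s ≤ m :=
  ((le_kinf_iff hr).1 le_rfl 0 hr).trans (Nat.div_le_of_le_mul (Nat.mul_le_mul_right m hs))

theorem le_eta_iff (hm : 0 < m) (hr : 0 < r) (hlam : ∀ i < r, 0 < lam i) {k t : ℕ}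
    (hk : k ≤ ∑ i ∈ range r, lam i) (ht : 0 < t) (htm : t ≤ m) :
    t ≤ eta m r lam k ↔ etaThreshold m r lam t ≤ k := by
  have hkinf : ∀ s : ℕ → ℕ, t ≤ kinf m r lam s ↔ ∀ i < r, t * lam i ⌈/⌉ m ≤ s i := fun s => by
    rw [le_kinf_iff hr]
    exact forall₂_congr fun i hi => le_mul_div_iff_ceilDiv_le hm (hlam i hi) (s i)
  rw [eta]
  set S := {v | ∃ s : ℕ → ℕ, (∀ i, i < r → 1 ≤ s i ∧ s i ≤ lam i) ∧
      ∑ i ∈ range r, s i = k ∧ v = kinf m r lam s}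
  have hbdd : BddAbove S := ⟨m, by rintro _ ⟨s, hs, -, rfl⟩; exact kinf_le hr (hs 0 hr).2⟩
  constructor
  · intro htS
    have hne : S.Nonempty := Set.nonempty_iff_ne_empty.2 fun h => by
      rw [h, csSup_empty, bot_eq_zero'] at htS
      omega
    obtain ⟨s, -, rfl, hsS⟩ := Nat.sSup_mem hne hbdd
    have hts := (hkinf s).1 (hsS ▸ htS)
    exact sum_le_sum fun i hi => hts i (mem_range.1 hi)
  · intro hFk
    obtain ⟨s, hs, hsum⟩ := exists_sum_range_eq_of_le
      (fun i _ => mul_ceilDiv_le (l := lam i) hm htm) hFk hk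
    have hs' : ∀ i < r, 1 ≤ s i ∧ s i ≤ lam i := fun i hi =>
      ⟨(one_le_mul_ceilDiv hm ht (hlam i hi)).trans (hs i hi).1, (hs i hi).2⟩
    exact ((hkinf s).2 fun i hi => (hs i hi).1).trans (le_csSup hbdd ⟨s, hs', hsum, rfl⟩)

theorem eta_eq_card_filter (hm : 0 < m) (hlam : ∀ i < r, 0 < lam i) {k : ℕ}
    (hk : k < ∑ i ∈ range r, lam i) :
    eta m r lam k = #{t ∈ Ico 1 m | etaThreshold m r lam t ≤ k} := by
  have hr : 0 < r := Nat.pos_of_ne_zero fun h => by simp [h] at hk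
  have hlt : eta m r lam k < m := by
    by_contra! h
    rw [le_eta_iff hm hr hlam hk.le hm le_rfl, etaThreshold_self hm] at h
    omega
  have hfilter : {t ∈ Ico 1 m | etaThreshold m r lam t ≤ k} = Icc 1 (eta m r lam k) := by
    ext t
    rw [mem_filter, mem_Ico, mem_Icc]
    constructor
    · rintro ⟨⟨ht, htm⟩, hFt⟩
      exact ⟨ht, (le_eta_iff hm hr hlam hk.le ht htm.le).2 hFt⟩
    · rintro ⟨ht, htη⟩
      exact ⟨⟨ht, by omega⟩, (le_eta_iff hm hr hlam hk.le ht (by omega)).1 htη⟩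
  rw [hfilter, Nat.card_Icc, Nat.add_sub_cancel]

/-- Double counting the pairs `(k, t)` with `t ≤ η_k`. -/
theorem sum_eta_eq_sum_sub_etaThreshold (hm : 0 < m) (hlam : ∀ i < r, 0 < lam i) :
    ∑ k ∈ Ico r (∑ i ∈ range r, lam i), eta m r lam k =
      ∑ t ∈ Ico 1 m, (∑ i ∈ range r, lam i - etaThreshold m r lam t) := by
  rw [sum_congr rfl fun k hk => eta_eq_card_filter hm hlam (mem_Ico.1 hk).2]
  simp_rw [card_filter]
  rw [sum_comm]
  refine sum_congr rfl fun t ht => ?_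
  obtain ⟨ht1, htm⟩ := mem_Ico.1 ht
  have hF := mem_Icc.1 (etaThreshold_mem_Icc hm hlam ht1 htm.le)
  rw [← card_filter]
  have : {k ∈ Ico r (∑ i ∈ range r, lam i) | etaThreshold m r lam t ≤ k} =
      Ico (etaThreshold m r lam t) (∑ i ∈ range r, lam i) := by
    ext k
    rw [mem_filter, mem_Ico, mem_Ico]
    omega
  rw [this, Nat.card_Ico]

theorem two_mul_sum_etaThreshold_add_sum_gcd (hm : 0 < m) :
    2 * ∑ t ∈ Ico 1 m, etaThreshold m r lam t + ∑ i ∈ range r, Nat.gcd m (lam i) =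
      (m - 1) * (∑ i ∈ range r, lam i + r) + r := by
  unfold etaThreshold
  rw [sum_comm, mul_sum, ← sum_add_distrib,
    sum_congr rfl fun i _ => two_mul_sum_mul_ceilDiv_add_gcd hm, sum_add_distrib, ← mul_sum,
    sum_add_distrib]
  simp

end Eta

theorem stmt4_general (m r : ℕ) (lam : ℕ → ℕ) (hm : 0 < m)
    (hlam : ∀ i, i < r → 0 < lam i) (lam0 : ℕ)
    (h0 : lam0 = ∑ i ∈ Finset.range r, lam i) :
    2 * ∑ k ∈ Finset.Ico r lam0, eta m r lam k =
      (m - 1) * (lam0 - r) + (∑ i ∈ Finset.range r, Nat.gcd m (lam i)) - r := by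
  have hcomplement : ∑ t ∈ Ico 1 m, (lam0 - etaThreshold m r lam t) +
      ∑ t ∈ Ico 1 m, etaThreshold m r lam t = (m - 1) * lam0 := by
    rw [← sum_add_distrib, sum_congr rfl fun t ht => Nat.sub_add_cancel <| h0 ▸
      (mem_Icc.1 (etaThreshold_mem_Icc hm hlam (mem_Ico.1 ht).1 (mem_Ico.1 ht).2.le)).2,
      sum_const, Nat.card_Ico, smul_eq_mul]
  have hcount := two_mul_sum_etaThreshold_add_sum_gcd hm (r := r) (lam := lam)
  have hr : r ≤ lam0 := by
    have := mem_Icc.1 (etaThreshold_mem_Icc (lam := lam) hm hlam hm le_rfl)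
    omega
  have hmr : (m - 1) * r ≤ (m - 1) * lam0 := Nat.mul_le_mul_left _ hr
  rw [← h0, Nat.mul_add] at hcount
  rw [h0, sum_eta_eq_sum_sub_etaThreshold hm hlam, ← h0, Nat.mul_sub]
  omega

/-- ∑_{k=r}^{λ₀-1} η_k = ((m-1)(λ₀-r) - r + ∑ gcd(m,λ_i))/2 -/
theorem stmt4 (m r : ℕ) (lam : ℕ → ℕ) (hm : 0 < m) (hr : 0 < r)
    (hlam : ∀ i, i < r → 0 < lam i) (lam0 : ℕ)
    (h0 : lam0 = ∑ i ∈ Finset.range r, lam i) (hrl : r < lam0) :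
    2 * ∑ k ∈ Finset.Ico r lam0, eta m r lam k =
      (m - 1) * (lam0 - r) + (∑ i ∈ Finset.range r, Nat.gcd m (lam i)) - r :=
  stmt4_general m r lam hm hlam lam0 h0
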